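/- arXiv:2002.04413 — 3 statements merged into one kernel-verified Lean document; each statement's English description precedes it below -/
import Mathlib

section
/- If f ∈ L¹(0,∞), then the Cesàro transform Cf lies in the weak-L¹ space and moreover t·μ(t, Cf) → 0 as t → 0⁺, where μ(·, Cf) is the decreasing rearrangement of |Cf|; in particular sup_{t>0} t·μ(t,Cf) ≤ ‖f‖_{L¹}. -/
/-!
Since `x * |Cf x| ≤ ∫_{(0,x]} |f|`, the function `Cf` exceeds a level `s` only at points
`x < ‖f‖₁ / s`, which bounds `μ(t, Cf)` by `‖f‖₁ / t`. For the limit at `0⁺`, `x * |Cf x|` is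
small on some `(0, δ)` by absolute continuity of the integral, while on `[δ, ∞)` the function
`|Cf|` stays below `‖f‖₁ / δ`, which is under the level `ε / t` once `t` is small.
-/

open MeasureTheory Set

/-- The decreasing rearrangement of `|g|` for a function on `(0,∞)`. -/
noncomputable def mu (g : ℝ → ℝ) (t : ℝ) : ℝ :=
  sInf {s : ℝ | 0 ≤ s ∧ volume {x : ℝ | x ∈ Ioi (0:ℝ) ∧ s < |g x|} ≤ ENNReal.ofReal t}

open Filter Topology

section Rearrangement

variable {g : ℝ → ℝ} {s t A ε δ : ℝ}

lemma mu_nonneg : 0 ≤ mu g t :=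
  Real.sInf_nonneg fun _ hs => hs.1

lemma mu_le_of_forall_lt (hs : 0 ≤ s) (h : ∀ x, 0 < x → s < |g x| → x < t) : mu g t ≤ s := by
  refine csInf_le ⟨0, fun _ hr => hr.1⟩ ⟨hs, ?_⟩
  calc volume {x : ℝ | x ∈ Ioi (0:ℝ) ∧ s < |g x|}
      ≤ volume (Ioo 0 t) := measure_mono fun x ⟨hx, hgx⟩ => ⟨hx, h x hx hgx⟩
    _ = ENNReal.ofReal t := by rw [Real.volume_Ioo, sub_zero]

lemma mul_mu_le_of_mul_abs_le (hA : ∀ x, 0 < x → x * |g x| ≤ A) (hε : 0 ≤ ε) (hδ : 0 < δ)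
    (hsmall : ∀ x ∈ Ioo 0 δ, x * |g x| ≤ ε) (ht : 0 < t) (htA : t * A ≤ ε * δ) :
    t * mu g t ≤ ε := by
  suffices mu g t ≤ ε / t by rwa [le_div_iff₀' ht] at this
  refine mu_le_of_forall_lt (div_nonneg hε ht.le) fun x hx hgx => ?_
  by_contra! htx
  have hεt : ε < t * |g x| := by rwa [div_lt_iff₀' ht] at hgx
  rcases lt_or_ge x δ with hxδ | hδx
  · exact (hsmall x ⟨hx, hxδ⟩).not_gt <|
      hεt.trans_le (mul_le_mul_of_nonneg_right htx (abs_nonneg _))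
  · refine (lt_irrefl (t * A)) ?_
    calc t * A ≤ ε * δ := htA
      _ < t * |g x| * δ := mul_lt_mul_of_pos_right hεt hδ
      _ ≤ t * |g x| * x := mul_le_mul_of_nonneg_left hδx (by positivity)
      _ = t * (x * |g x|) := by ring
      _ ≤ t * A := mul_le_mul_of_nonneg_left (hA x hx) ht.le

lemma mul_mu_le (hA : ∀ x, 0 < x → x * |g x| ≤ A) (ht : 0 < t) : t * mu g t ≤ A := by
  have hA0 : 0 ≤ A := (mul_nonneg zero_le_one (abs_nonneg _)).trans (hA 1 one_pos)
  exact mul_mu_le_of_mul_abs_le hA hA0 ht (fun x hx => hA x hx.1) ht (mul_comm t A).le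

lemma tendsto_mul_mu_nhdsGT_zero (hA : ∀ x, 0 < x → x * |g x| ≤ A)
    (hg : Tendsto (fun x => x * |g x|) (𝓝[>] 0) (𝓝 0)) :
    Tendsto (fun t => t * mu g t) (𝓝[>] 0) (𝓝 0) := by
  have eventually_le : ∀ ε > 0, ∀ᶠ t in 𝓝[>] 0, t * mu g t ≤ ε := by
    intro ε hε
    obtain ⟨δ, hδ, hsmall⟩ : ∃ δ > 0, Ioo 0 δ ⊆ {x | x * |g x| ≤ ε} :=
      mem_nhdsGT_iff_exists_Ioo_subset.1 (hg (Iic_mem_nhds hε))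
    have hmulA : Tendsto (fun t => t * A) (𝓝[>] 0) (𝓝 0) :=
      tendsto_nhdsWithin_of_tendsto_nhds <| (continuous_mul_const A).tendsto' 0 0 (zero_mul A)
    filter_upwards [self_mem_nhdsWithin, hmulA.eventually (ge_mem_nhds (mul_pos hε hδ))]
      with t (ht : 0 < t) htA
    exact mul_mu_le_of_mul_abs_le hA hε.le hδ (fun x hx => hsmall hx) ht htA
  refine tendsto_order.2 ⟨fun a ha => ?_, fun ε hε => ?_⟩
  · filter_upwards [self_mem_nhdsWithin] with t (ht : 0 < t)
    exact ha.trans_le (mul_nonneg ht.le mu_nonneg)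
  · exact (eventually_le (ε / 2) (half_pos hε)).mono fun t h => h.trans_lt (half_lt_self hε)

end Rearrangement

lemma mul_abs_cesaro_le (f : ℝ → ℝ) {x : ℝ} (hx : 0 < x) :
    x * |(1 / x) * ∫ s in Ioc (0:ℝ) x, f s| ≤ ∫ s in Ioc (0:ℝ) x, |f s| := by
  rw [abs_mul, ← mul_assoc, abs_of_pos (one_div_pos.2 hx), mul_one_div_cancel hx.ne', one_mul]
  exact abs_integral_le_integral_abs

lemma tendsto_setIntegral_Ioc_nhdsGT_zero {E : Type*} [NormedAddCommGroup E] [NormedSpace ℝ E]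
    {f : ℝ → E} (hf : IntegrableOn f (Ioi 0)) :
    Tendsto (fun u => ∫ s in Ioc (0:ℝ) u, f s) (𝓝[>] 0) (𝓝 0) := by
  have hvol : Tendsto (volume.restrict (Ioi (0:ℝ)) ∘ Ioc 0) (𝓝[>] 0) (𝓝 0) := by
    have : Tendsto ENNReal.ofReal (𝓝[>] 0) (𝓝 0) := tendsto_nhdsWithin_of_tendsto_nhds <|
      ENNReal.continuous_ofReal.tendsto' 0 0 ENNReal.ofReal_zero
    refine this.congr fun u => ?_
    rw [Function.comp_apply, Measure.restrict_apply measurableSet_Ioc,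
      inter_eq_left.2 Ioc_subset_Ioi_self, Real.volume_Ioc, sub_zero]
  refine (hf.tendsto_setIntegral_nhds_zero hvol).congr fun u => ?_
  rw [Measure.restrict_restrict measurableSet_Ioc, inter_eq_left.2 Ioc_subset_Ioi_self]

/-- If `f ∈ L¹(0,∞)`, then `Cf` lies in weak-`L¹`, with
`t·μ(t,Cf) → 0` as `t → 0⁺`, and `sup_{t>0} t·μ(t,Cf) ≤ ‖f‖₁`. -/
theorem cesaro_weakL1 (f : ℝ → ℝ) (hf : IntegrableOn f (Ioi (0:ℝ))) :
    Filter.Tendsto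
        (fun t : ℝ => t * mu (fun u : ℝ => (1 / u) * ∫ s in Ioc (0:ℝ) u, f s) t)
        (nhdsWithin 0 (Ioi (0:ℝ))) (nhds 0)
    ∧ ∀ t : ℝ, 0 < t →
        t * mu (fun u : ℝ => (1 / u) * ∫ s in Ioc (0:ℝ) u, f s) t
          ≤ ∫ s in Ioi (0:ℝ), |f s| := by
  have hIoc_le : ∀ x, ∫ s in Ioc (0:ℝ) x, |f s| ≤ ∫ s in Ioi (0:ℝ), |f s| := fun x =>
    setIntegral_mono_set hf.abs (.of_forall fun _ => abs_nonneg _) Ioc_subset_Ioi_self.eventuallyLE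
  have hA := fun x hx => (mul_abs_cesaro_le f hx).trans (hIoc_le x)
  refine ⟨tendsto_mul_mu_nhdsGT_zero hA ?_, fun t ht => mul_mu_le hA ht⟩
  refine tendsto_of_tendsto_of_tendsto_of_le_of_le' tendsto_const_nhds
    (tendsto_setIntegral_Ioc_nhdsGT_zero hf.abs) ?_ ?_
  all_goals filter_upwards [self_mem_nhdsWithin] with x (hx : 0 < x)
  · positivity
  · exact mul_abs_cesaro_le f hx
end

section
/- Let φ(t) = t·log(1 + 1/t) for t > 0. Then there exists an absolute constant c > 0 such that for all t > 0, ∫ₜ^∞ φ(s)/s² ds ≤ c·log²(1 + 1/√t), i.e. ∫ₜ^∞ (1/s)·log(1 + 1/s) ds ≤ c·log²(1 + 1/√t). -/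
/-!
Substituting `a = 1/√s`, the integrand `a² log(1 + a²)` is at most four times the derivative
`a³ log(1 + a) / (1 + a)` of `-log²(1 + 1/√s)`: for `a ≥ 1` use `log(1 + a²) ≤ 2 log(1 + a)`,
for `a ≤ 1` use `log(1 + a²) ≤ a²` and `log(1 + a) ≥ 2a/(a + 2)`. Integrating this comparison
over `(t, ∞)`, where `log²(1 + 1/√s) → 0`, gives the bound with `c = 4`.
-/

open MeasureTheory Set Filter Topology Real

theorem setIntegral_Ioi_le_of_le_deriv {f g G : ℝ → ℝ} {t L : ℝ}
    (hG : ∀ x ∈ Ici t, HasDerivAt G (g x) x) (hf : ∀ x ∈ Ioi t, 0 ≤ f x)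
    (hfg : ∀ x ∈ Ioi t, f x ≤ g x) (hlim : Tendsto G atTop (𝓝 L)) :
    ∫ x in Ioi t, f x ≤ L - G t := by
  have hg : ∀ x ∈ Ioi t, 0 ≤ g x := fun x hx => (hf x hx).trans (hfg x hx)
  rw [← integral_Ioi_of_hasDerivAt_of_nonneg' hG hg hlim]
  exact integral_mono_of_nonneg (ae_restrict_of_forall_mem measurableSet_Ioi hf)
    (integrableOn_Ioi_deriv_of_nonneg' hG hg hlim) (ae_restrict_of_forall_mem measurableSet_Ioi hfg)

theorem one_add_mul_log_one_add_sq_le {a : ℝ} (ha : 0 ≤ a) :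
    (1 + a) * log (1 + a ^ 2) ≤ 4 * a * log (1 + a) := by
  rcases le_total a 1 with ha1 | ha1
  · have hsq : log (1 + a ^ 2) ≤ a ^ 2 := by
      linarith [log_le_sub_one_of_pos (x := 1 + a ^ 2) (by positivity)]
    have hlin : 2 * a ≤ (a + 2) * log (1 + a) := by
      have := le_log_one_add_of_nonneg ha
      rwa [div_le_iff₀' (by linarith)] at this
    have hmul : (a + 2) * ((1 + a) * log (1 + a ^ 2)) ≤ (a + 2) * (4 * a * log (1 + a)) :=
      calc (a + 2) * ((1 + a) * log (1 + a ^ 2)) ≤ (a + 2) * (1 + a) * a ^ 2 := by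
            nlinarith [mul_le_mul_of_nonneg_left hsq (by positivity : 0 ≤ (a + 2) * (1 + a))]
        _ ≤ 8 * a ^ 2 := by
            gcongr
            nlinarith
        _ ≤ (a + 2) * (4 * a * log (1 + a)) := by nlinarith [mul_le_mul_of_nonneg_left hlin ha]
    exact le_of_mul_le_mul_left hmul (by linarith)
  · have hsq : log (1 + a ^ 2) ≤ 2 * log (1 + a) := by
      calc log (1 + a ^ 2) ≤ log ((1 + a) ^ 2) := log_le_log (by positivity) (by nlinarith)
        _ = 2 * log (1 + a) := by rw [log_pow]; norm_num
    have hlog : 0 ≤ log (1 + a) := log_nonneg (by linarith)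
    nlinarith

theorem inv_mul_log_one_add_inv_le {s : ℝ} (hs : 0 < s) :
    1 / s * log (1 + 1 / s) ≤ 4 * (log (1 + 1 / √s) / (s * (√s + 1))) := by
  have hr : 0 < √s := sqrt_pos.2 hs
  have hinv : 1 / s = (1 / √s) ^ 2 := by rw [div_pow, one_pow, sq_sqrt hs.le]
  have hden : s * (√s + 1) = (1 + 1 / √s) / (1 / √s) ^ 3 := by
    field_simp
    exact (sq_sqrt hs.le).symm
  rw [hinv, hden]
  set a := 1 / √s
  have ha : 0 < a := by positivity
  have key := one_add_mul_log_one_add_sq_le ha.le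
  rw [div_div_eq_mul_div, mul_div_assoc', le_div_iff₀ (by positivity)]
  nlinarith [pow_pos ha 2]

theorem hasDerivAt_neg_log_one_add_inv_sqrt_sq {x : ℝ} (hx : 0 < x) :
    HasDerivAt (fun y => -log (1 + 1 / √y) ^ 2) (log (1 + 1 / √x) / (x * (√x + 1))) x := by
  have hr : 0 < √x := sqrt_pos.2 hx
  have hinv : HasDerivAt (fun y => 1 + (√y)⁻¹) (-(1 / (2 * √x)) / √x ^ 2) x :=
    ((hasDerivAt_sqrt hx.ne').inv hr.ne').const_add 1
  simp only [one_div] at hinv ⊢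
  refine ((hinv.log (by positivity)).pow 2).neg.congr_deriv ?_
  rw [sq_sqrt hx.le]
  field_simp
  ring

theorem tendsto_log_one_add_inv_sqrt_atTop :
    Tendsto (fun y => log (1 + 1 / √y)) atTop (𝓝 0) := by
  have h := (continuousAt_log (by norm_num : (1 : ℝ) + 0 ≠ 0)).tendsto.comp
    (tendsto_sqrt_atTop.inv_tendsto_atTop.const_add 1)
  simpa [Function.comp_def] using h

/-- There is an absolute constant `c > 0` such that for all `t > 0`,
`∫ₜ^∞ (1/s)·log(1 + 1/s) ds ≤ c·log²(1 + 1/√t)`. -/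
theorem integral_log_upper_bound :
    ∃ c : ℝ, 0 < c ∧ ∀ t : ℝ, 0 < t →
      (∫ s in Ioi t, (1 / s) * Real.log (1 + 1 / s))
        ≤ c * (Real.log (1 + 1 / Real.sqrt t)) ^ 2 := by
  refine ⟨4, by norm_num, fun t ht => ?_⟩
  have hbound := setIntegral_Ioi_le_of_le_deriv
    (G := fun y => 4 * -log (1 + 1 / √y) ^ 2)
    (fun x hx => (hasDerivAt_neg_log_one_add_inv_sqrt_sq (ht.trans_le hx)).const_mul 4)
    (fun s hs => have hs' : 0 ≤ 1 / s := (one_div_pos.2 (ht.trans hs)).le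
      mul_nonneg hs' (log_nonneg (le_add_of_nonneg_right hs')))
    (fun s hs => inv_mul_log_one_add_inv_le (ht.trans hs))
    ((tendsto_log_one_add_inv_sqrt_atTop.pow 2).neg.const_mul 4)
  linarith
end

section
/- Let φ be quasiconcave on (0,∞) with 1/φ locally integrable at 0, and define ψ(t) = t·(∫₀ᵗ ds/φ(s))⁻¹. Then ψ is quasiconcave: ψ(t) > 0 for t > 0, ψ is nondecreasing, and ψ(t)/t is nonincreasing. -/
open MeasureTheory Set

/-!
With `F t = ∫₀ᵗ ds/φ(s)`, we have `ψ t = t / F t` and `ψ t / t = 1 / F t`. Since `1/φ` is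
nonincreasing, its running average `F t / t` is nonincreasing, so `ψ` is nondecreasing; and
`F` is nondecreasing because `1/φ > 0`, so `ψ t / t` is nonincreasing.
-/

section IocIntegral

variable {g : ℝ → ℝ} {a b c : ℝ}

lemma mul_le_setIntegral_Ioc_of_le (hab : a ≤ b) (hg : IntegrableOn g (Ioc a b))
    (h : ∀ s ∈ Ioc a b, c ≤ g s) : (b - a) * c ≤ ∫ s in Ioc a b, g s := by
  have := setIntegral_ge_of_const_le_real measurableSet_Ioc measure_Ioc_lt_top.ne h hg
  rwa [Real.volume_real_Ioc_of_le hab, mul_comm] at this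

lemma setIntegral_Ioc_le_mul_of_le (hab : a ≤ b) (hg : IntegrableOn g (Ioc a b))
    (h : ∀ s ∈ Ioc a b, g s ≤ c) : ∫ s in Ioc a b, g s ≤ (b - a) * c := by
  calc ∫ s in Ioc a b, g s ≤ ∫ _ in Ioc a b, c :=
        setIntegral_mono_on hg (integrableOn_const measure_Ioc_lt_top.ne) measurableSet_Ioc h
    _ = (b - a) * c := by rw [setIntegral_const, Real.volume_real_Ioc_of_le hab, smul_eq_mul]

end IocIntegral

section RunningIntegral

variable {g : ℝ → ℝ}

lemma setIntegral_Ioc_zero_add (hg : ∀ t, 0 < t → IntegrableOn g (Ioc 0 t)) {a b : ℝ}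
    (ha : 0 < a) (hab : a ≤ b) :
    ∫ s in Ioc 0 b, g s = (∫ s in Ioc 0 a, g s) + ∫ s in Ioc a b, g s := by
  rw [← Ioc_union_Ioc_eq_Ioc ha.le hab, setIntegral_union (Ioc_disjoint_Ioc_of_le le_rfl)
    measurableSet_Ioc (hg a ha) ((hg b (ha.trans_le hab)).mono_set (Ioc_subset_Ioc ha.le le_rfl))]

lemma monotoneOn_setIntegral_Ioc_zero (hg : ∀ t, 0 < t → IntegrableOn g (Ioc 0 t))
    (hg₀ : ∀ t, 0 < t → 0 ≤ g t) : MonotoneOn (fun t => ∫ s in Ioc 0 t, g s) (Ioi 0) :=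
  fun _ ha b _ hab =>
    setIntegral_mono_set (hg b (lt_of_lt_of_le ha hab))
      ((ae_restrict_iff' measurableSet_Ioc).2 (.of_forall fun s hs => hg₀ s hs.1))
      (Ioc_subset_Ioc le_rfl hab).eventuallyLE

lemma mul_le_setIntegral_Ioc_zero (hanti : AntitoneOn g (Ioi 0)) {t : ℝ} (ht : 0 < t)
    (hg : IntegrableOn g (Ioc 0 t)) : t * g t ≤ ∫ s in Ioc 0 t, g s := by
  simpa using mul_le_setIntegral_Ioc_of_le ht.le hg fun s hs => hanti hs.1 ht hs.2

lemma antitoneOn_setIntegral_Ioc_zero_div (hg : ∀ t, 0 < t → IntegrableOn g (Ioc 0 t))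
    (hanti : AntitoneOn g (Ioi 0)) :
    AntitoneOn (fun t => (∫ s in Ioc 0 t, g s) / t) (Ioi 0) := by
  intro a (ha : 0 < a) b (hb : 0 < b) hab
  have hlower := mul_le_setIntegral_Ioc_zero hanti ha (hg a ha)
  have hupper : ∫ s in Ioc a b, g s ≤ (b - a) * g a :=
    setIntegral_Ioc_le_mul_of_le hab ((hg b hb).mono_set (Ioc_subset_Ioc ha.le le_rfl))
      fun s hs => hanti ha (ha.trans hs.1) hs.1.le
  rw [div_le_div_iff₀ hb ha, setIntegral_Ioc_zero_add hg ha hab]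
  -- `a F b = a F a + a ∫ₐᵇ g ≤ a F a + (b - a) a g a ≤ a F a + (b - a) F a = b F a`
  nlinarith [mul_le_mul_of_nonneg_left hupper ha.le,
    mul_le_mul_of_nonneg_left hlower (sub_nonneg.2 hab)]

end RunningIntegral

theorem psi_quasiconcave_general (φ : ℝ → ℝ)
    (hpos : ∀ t ∈ Ioi (0:ℝ), 0 < φ t)
    (hmono : MonotoneOn φ (Ioi (0:ℝ)))
    (hloc : ∀ t : ℝ, 0 < t → IntegrableOn (fun s => 1 / φ s) (Ioc 0 t)) :
    (∀ t : ℝ, 0 < t → 0 < t * (∫ s in Ioc (0:ℝ) t, 1 / φ s)⁻¹)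
    ∧ MonotoneOn (fun t : ℝ => t * (∫ s in Ioc (0:ℝ) t, 1 / φ s)⁻¹) (Ioi (0:ℝ))
    ∧ AntitoneOn
        (fun t : ℝ => (t * (∫ s in Ioc (0:ℝ) t, 1 / φ s)⁻¹) / t) (Ioi (0:ℝ)) := by
  set F : ℝ → ℝ := fun t => ∫ s in Ioc (0:ℝ) t, 1 / φ s
  have hanti : AntitoneOn (fun s => 1 / φ s) (Ioi 0) := fun a ha b _ hab =>
    one_div_le_one_div_of_le (hpos a ha) (hmono ha (mem_Ioi.2 (lt_of_lt_of_le ha hab)) hab)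
  have hF : ∀ t, 0 < t → 0 < F t := fun t ht =>
    lt_of_lt_of_le (mul_pos ht (one_div_pos.2 (hpos t ht)))
      (mul_le_setIntegral_Ioc_zero hanti ht (hloc t ht))
  have havg := antitoneOn_setIntegral_Ioc_zero_div hloc hanti
  have hFmono := monotoneOn_setIntegral_Ioc_zero hloc fun t ht => (one_div_pos.2 (hpos t ht)).le
  refine ⟨fun t ht => mul_pos ht (inv_pos.2 (hF t ht)), ?_, ?_⟩
  · intro a (ha : 0 < a) b (hb : 0 < b) hab
    have := inv_anti₀ (div_pos (hF b hb) hb) (havg ha hb hab)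
    rwa [inv_div, inv_div, div_eq_mul_inv a, div_eq_mul_inv b] at this
  · intro a (ha : 0 < a) b (hb : 0 < b) hab
    simpa only [mul_div_cancel_left₀ _ ha.ne', mul_div_cancel_left₀ _ hb.ne'] using
      inv_anti₀ (hF a ha) (hFmono ha hb hab)

/-- If `φ` is quasiconcave on `(0,∞)` and `1/φ` is locally integrable
at `0`, then `ψ(t) = t·(∫₀ᵗ ds/φ(s))⁻¹` is quasiconcave. -/
theorem psi_quasiconcave (φ : ℝ → ℝ)
    (hpos : ∀ t ∈ Ioi (0:ℝ), 0 < φ t)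
    (hmono : MonotoneOn φ (Ioi (0:ℝ)))
    (hquasi : AntitoneOn (fun t => φ t / t) (Ioi (0:ℝ)))
    (hloc : ∀ t : ℝ, 0 < t → IntegrableOn (fun s => 1 / φ s) (Ioc 0 t)) :
    (∀ t : ℝ, 0 < t → 0 < t * (∫ s in Ioc (0:ℝ) t, 1 / φ s)⁻¹)
    ∧ MonotoneOn (fun t : ℝ => t * (∫ s in Ioc (0:ℝ) t, 1 / φ s)⁻¹) (Ioi (0:ℝ))
    ∧ AntitoneOn
        (fun t : ℝ => (t * (∫ s in Ioc (0:ℝ) t, 1 / φ s)⁻¹) / t) (Ioi (0:ℝ)) :=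
  psi_quasiconcave_general φ hpos hmono hloc
end
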